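/- arXiv:2605.14168 — 2 statements merged into one kernel-verified Lean document; each statement's English description precedes it below -/
import Mathlib

section
/- Let c be a finite set with a distinguished element i ∈ c, let d ≥ 1, and for each j ∈ c let q_j be the uniform distribution on a nondegenerate interval I_j, with q = ⊗_{j∈c} q_j the product measure on ℝ^c. For a multi-index k = (k_j)_{j∈c} ∈ {1, …, d}^c define h_k(x) = k_i · x_i^{k_i−1} · ∏_{j∈c∖{i}} (x_j^{k_j} − E_{q_j}[x_j^{k_j}]). Define d × d matrices: A^i_{m,n} = m·n·E_{q_i}[X^{m+n−2}] and, for j ∈ c∖{i}, A^j_{m,n} = E_{q_j}[(X^m − E[X^m])(X^n − E[X^n])], m, n ∈ {1, …, d}. Then for any nonempty subset K ⊆ {1, …, d}^c, the Gram matrix M indexed by K with M_{k,k'} = E_q[h_k · h_{k'}] satisfies λ_min(M) ≥ ∏_{j∈c} λ_min(A^j) > 0. -/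
/-!
The integrand `h_k h_{k'}` is a product over the coordinates, so under the product measure the
Gram matrix `M` is the principal submatrix, indexed by `K`, of the Kronecker product `⊗_j A^j`.
Each `A^j` is itself the Gram matrix in `L²(q_j)` of polynomials of pairwise distinct degrees
(`m X^{m-1}` for `j = i`, the centred monomials `X^m - E[X^m]` otherwise), hence positive
definite since `q_j` charges no finite set. The eigenvalues of a Kronecker product are the
products of the eigenvalues of the factors, so `(∏_j λ_min(A^j)) • 1 ≤ ⊗_j A^j` in the
Loewner order, and this inequality passes to principal submatrices.
-/

open MeasureTheory

/-- The uniform probability measure on the interval `[a, b]`. -/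
noncomputable def unif (a b : ℝ) : Measure ℝ :=
  (volume (Set.Icc a b))⁻¹ • volume.restrict (Set.Icc a b)

/-- The mostly centered basis function `h_k(x) = k_i·x_i^{k_i-1}·∏_{j≠i}(x_j^{k_j} − E[x_j^{k_j}])`,
where the `j`-th coordinate is centered with respect to the uniform distribution on
`[a_j, b_j]`. -/
noncomputable def hfun {ι : Type*} [Fintype ι] [DecidableEq ι] (i : ι) (a b : ι → ℝ)
    (k : ι → ℕ) (x : ι → ℝ) : ℝ :=
  (k i : ℝ) * x i ^ (k i - 1) *
    ∏ j ∈ Finset.univ.erase i, (x j ^ k j - ∫ y, y ^ k j ∂(unif (a j) (b j)))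

open ProbabilityTheory Polynomial Matrix
open scoped MatrixOrder ComplexOrder

lemma unif_eq_cond (a b : ℝ) : unif a b = volume[|Set.Icc a b] := rfl

instance isFiniteMeasure_unif (a b : ℝ) : IsFiniteMeasure (unif a b) := by
  rw [unif_eq_cond]; infer_instance

lemma isProbabilityMeasure_unif {a b : ℝ} (h : a < b) : IsProbabilityMeasure (unif a b) :=
  cond_isProbabilityMeasure_of_finite (by simp [h]) (by simp)

lemma Continuous.integrable_unif {f : ℝ → ℝ} (hf : Continuous f) (a b : ℝ) :
    Integrable f (unif a b) := by
  rw [unif_eq_cond, ← Measure.restrict_eq_self_of_ae_mem (ae_cond_mem measurableSet_Icc)]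
  exact hf.continuousOn.integrableOn_compact isCompact_Icc

lemma integral_eval_sq_unif_pos {a b : ℝ} (h : a < b) {p : ℝ[X]} (hp : p ≠ 0) :
    0 < ∫ x, p.eval x ^ 2 ∂unif a b := by
  have := isProbabilityMeasure_unif h
  have hroots := p.finite_setOfPred_isRoot hp
  have hsupp : Function.support (fun x => p.eval x ^ 2) = {x | p.IsRoot x}ᶜ := by
    ext; simp [IsRoot]
  rw [integral_pos_iff_support_of_nonneg (fun x => sq_nonneg _)
    ((p.continuous.pow 2).integrable_unif a b), hsupp,
    (prob_compl_eq_one_iff (μ := unif a b) hroots.measurableSet).2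
      (cond_absolutelyContinuous (hroots.measure_zero volume))]
  exact one_pos

theorem Polynomial.linearIndependent_of_injective_natDegree {K ι : Type*} [Field K]
    {p : ι → K[X]} (hp : ∀ m, p m ≠ 0) (hdeg : Function.Injective fun m => (p m).natDegree) :
    LinearIndependent K p := by
  refine linearIndependent_iff'.2 fun s g hsum m hm => by_contra fun hgm => ?_
  have hdeg_smul : ∀ m, g m ≠ 0 → (g m • p m).degree = (p m).natDegree := fun m hg => by
    rw [smul_eq_C_mul, degree_C_mul hg, degree_eq_natDegree (hp m)]
  have hsup := degree_sum_eq_of_disjoint (fun m => g m • p m) s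
    fun m₁ ⟨_, h₁⟩ m₂ ⟨_, h₂⟩ hne => by
      simp only [Function.onFun, Function.comp_apply,
        hdeg_smul m₁ (left_ne_zero_of_smul h₁), hdeg_smul m₂ (left_ne_zero_of_smul h₂),
        ne_eq, Nat.cast_inj]
      exact hdeg.ne hne
  rw [hsum, degree_zero, eq_comm, Finset.sup_eq_bot_iff] at hsup
  simpa [hdeg_smul m hgm] using hsup m hm

namespace Matrix

lemma dotProduct_mulVec_integral_mul {n α : Type*} [Fintype n] [MeasurableSpace α]
    {μ : Measure α} {g : n → α → ℝ} (hg : ∀ m n, Integrable (fun t => g m t * g n t) μ)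
    (x : n → ℝ) :
    x ⬝ᵥ (of fun m n => ∫ t, g m t * g n t ∂μ) *ᵥ x =
      ∫ t, (∑ m, x m * g m t) ^ 2 ∂μ := by
  have hsq (t : α) : (∑ m, x m * g m t) ^ 2 = ∑ m, ∑ n, x m * x n * (g m t * g n t) := by
    rw [sq, Finset.sum_mul_sum]
    exact Finset.sum_congr rfl fun m _ => Finset.sum_congr rfl fun n _ => by ring
  simp_rw [hsq]
  rw [integral_finsetSum _ fun m _ => integrable_finsetSum _ fun n _ => (hg m n).const_mul _]
  simp only [dotProduct, mulVec, of_apply, Finset.mul_sum]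
  refine Finset.sum_congr rfl fun m _ => ?_
  rw [integral_finsetSum _ fun n _ => (hg m n).const_mul _]
  refine Finset.sum_congr rfl fun n _ => ?_
  rw [integral_const_mul]
  ring

theorem posDef_of_integral_eval_mul_eval {n : Type*} [Fintype n] {μ : Measure ℝ}
    (hint : ∀ q : ℝ[X], Integrable (fun x => q.eval x) μ)
    (hpos : ∀ q : ℝ[X], q ≠ 0 → 0 < ∫ x, q.eval x ^ 2 ∂μ)
    {p : n → ℝ[X]} (hp : LinearIndependent ℝ p) :
    (of fun m n => ∫ x, (p m).eval x * (p n).eval x ∂μ).PosDef := by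
  have hherm : (of fun m n => ∫ x, (p m).eval x * (p n).eval x ∂μ).IsHermitian :=
    IsHermitian.ext fun m n => by simp only [of_apply, star_trivial, mul_comm]
  refine .of_dotProduct_mulVec_pos hherm fun x hx => ?_
  have hne : ∑ m, x m • p m ≠ 0 := fun h =>
    hx (funext (Fintype.linearIndependent_iff.1 hp x h))
  rw [star_trivial, dotProduct_mulVec_integral_mul fun m n => by simpa using hint (p m * p n)]
  simpa [eval_finsetSum] using hpos _ hne

theorem IsHermitian.le_ciInf_eigenvalues_iff {n 𝕜 : Type*} [Fintype n] [DecidableEq n]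
    [Nonempty n] [RCLike 𝕜] {A : Matrix n n 𝕜} (hA : A.IsHermitian) {c : ℝ} :
    c ≤ ⨅ s, hA.eigenvalues s ↔ c • 1 ≤ A := by
  rw [le_ciInf_iff (Set.finite_range _).bddBelow, ← Algebra.algebraMap_eq_smul_one,
    algebraMap_le_iff_le_spectrum hA.isSelfAdjoint, hA.spectrum_real_eq_range_eigenvalues]
  simp

theorem PosDef.ciInf_eigenvalues_pos {n 𝕜 : Type*} [Fintype n] [DecidableEq n]
    [Nonempty n] [RCLike 𝕜] {A : Matrix n n 𝕜} (hA : A.PosDef) :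
    0 < ⨅ s, hA.isHermitian.eigenvalues s := by
  obtain ⟨s, hs⟩ := exists_eq_ciInf_of_finite (f := hA.isHermitian.eigenvalues)
  exact hs ▸ hA.eigenvalues_pos s

theorem submatrix_le_submatrix {m n 𝕜 : Type*} [RCLike 𝕜]
    {A B : Matrix n n 𝕜} (h : A ≤ B) (e : m → n) : A.submatrix e e ≤ B.submatrix e e :=
  le_iff.2 ((le_iff.1 h).submatrix e)

variable {ι R : Type*} [Fintype ι] {l m n : ι → Type*}

def piKronecker [CommMonoid R] (A : ∀ j, Matrix (m j) (n j) R) :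
    Matrix (∀ j, m j) (∀ j, n j) R :=
  of fun u v => ∏ j, A j (u j) (v j)

theorem piKronecker_mul [CommSemiring R] [DecidableEq ι] [∀ j, Fintype (m j)]
    (A : ∀ j, Matrix (l j) (m j) R) (B : ∀ j, Matrix (m j) (n j) R) :
    piKronecker (fun j => A j * B j) = piKronecker A * piKronecker B := by
  ext u v
  simp only [piKronecker, of_apply, mul_apply, Fintype.prod_sum, Finset.prod_mul_distrib]

theorem conjTranspose_piKronecker [CommSemiring R] [StarRing R] (A : ∀ j, Matrix (m j) (n j) R) :
    (piKronecker A)ᴴ = piKronecker fun j => (A j)ᴴ := by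
  ext u v
  simp [piKronecker, conjTranspose_apply, star_prod]

theorem piKronecker_diagonal [CommMonoidWithZero R] [∀ j, DecidableEq (n j)]
    (d : ∀ j, n j → R) :
    piKronecker (fun j => diagonal (d j)) = diagonal fun u => ∏ j, d j (u j) := by
  ext u v
  by_cases h : u = v
  · subst h; simp [piKronecker]
  · obtain ⟨j, hj⟩ := Function.ne_iff.1 h
    rw [diagonal_apply_ne _ h, piKronecker, of_apply,
      Finset.prod_eq_zero (Finset.mem_univ j) (diagonal_apply_ne (d j) hj)]

theorem piKronecker_one [CommMonoidWithZero R] [∀ j, DecidableEq (n j)] :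
    piKronecker (fun j => (1 : Matrix (n j) (n j) R)) = 1 := by
  simpa using piKronecker_diagonal fun j (_ : n j) => (1 : R)

theorem prod_smul_one_le_piKronecker {𝕜 : Type*} [RCLike 𝕜] [DecidableEq ι]
    [∀ j, Fintype (n j)] [∀ j, DecidableEq (n j)] {A : ∀ j, Matrix (n j) (n j) 𝕜}
    (hA : ∀ j, (A j).IsHermitian) {c : ι → ℝ} (hc : ∀ j, 0 ≤ c j)
    (hcA : ∀ j s, c j ≤ (hA j).eigenvalues s) :
    (∏ j, c j) • 1 ≤ piKronecker A := by
  -- The Kronecker product of the eigenvector unitaries diagonalises `piKronecker A`,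
  -- with eigenvalues the products of eigenvalues of the factors.
  set U : ∀ j, Matrix (n j) (n j) 𝕜 := fun j => (hA j).eigenvectorUnitary
  set W := piKronecker U
  have hspec : A = fun j => U j * diagonal (fun s => ((hA j).eigenvalues s : 𝕜)) * star (U j) :=
    funext fun j => by
      conv_lhs => rw [(hA j).spectral_theorem, Unitary.conjStarAlgAut_apply]
      rfl
  have hW : W * star W = 1 := by
    rw [star_eq_conjTranspose, conjTranspose_piKronecker, ← piKronecker_mul, ← piKronecker_one]
    congr 1 with j : 1
    exact Unitary.mul_star_self_of_mem (hA j).eigenvectorUnitary.2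
  set D : Matrix (∀ j, n j) (∀ j, n j) 𝕜 :=
    diagonal fun u => ∏ j, ((hA j).eigenvalues (u j) : 𝕜)
  have hdiag : (∏ j, c j) • 1 ≤ D := by
    rw [← Algebra.algebraMap_eq_smul_one, algebraMap_eq_diagonal, le_iff, diagonal_sub,
      posSemidef_diagonal_iff]
    intro u
    simp only [Pi.algebraMap_apply, RCLike.algebraMap_eq_ofReal, ← RCLike.ofReal_prod,
      ← RCLike.ofReal_sub, RCLike.ofReal_nonneg, sub_nonneg]
    exact Finset.prod_le_prod (fun j _ => hc j) fun j _ => hcA j (u j)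
  have hAWD : piKronecker A = W * D * star W := by
    rw [hspec, piKronecker_mul, piKronecker_mul, piKronecker_diagonal, star_eq_conjTranspose,
      conjTranspose_piKronecker]
    rfl
  calc (∏ j, c j) • 1 = W * ((∏ j, c j) • 1) * star W := by
        rw [mul_smul_comm, mul_one, smul_mul_assoc, hW]
    _ ≤ W * D * star W := star_right_conjugate_le_conjugate hdiag W
    _ = piKronecker A := hAWD.symm

end Matrix

section CenteredBasis

variable {ι : Type*} [DecidableEq ι] (i : ι) (a b : ι → ℝ)

noncomputable def hfunFactor (j : ι) (k : ℕ) : ℝ[X] :=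
  if j = i then derivative (X ^ k) else X ^ k - C (∫ y, y ^ k ∂unif (a j) (b j))

lemma hfunFactor_self_succ (m : ℕ) : hfunFactor i a b i (m + 1) = C ((m : ℝ) + 1) * X ^ m := by
  simp [hfunFactor]

lemma hfunFactor_of_ne {j : ι} (hji : j ≠ i) (k : ℕ) :
    hfunFactor i a b j k = X ^ k - C (∫ y, y ^ k ∂unif (a j) (b j)) :=
  if_neg hji

lemma hfun_eq_prod_eval_hfunFactor [Fintype ι] (k : ι → ℕ) (x : ι → ℝ) :
    hfun i a b k x = ∏ j, (hfunFactor i a b j (k j)).eval (x j) := by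
  rw [← Finset.mul_prod_erase _ _ (Finset.mem_univ i), hfun]
  congr 1
  · simp [hfunFactor, derivative_X_pow]
  · refine Finset.prod_congr rfl fun j hj => ?_
    simp [hfunFactor_of_ne i a b (Finset.ne_of_mem_erase hj)]

lemma integral_hfun_mul_hfun [Fintype ι] (k k' : ι → ℕ) :
    ∫ x, hfun i a b k x * hfun i a b k' x ∂(Measure.pi fun j => unif (a j) (b j)) =
      ∏ j, ∫ y, (hfunFactor i a b j (k j)).eval y * (hfunFactor i a b j (k' j)).eval y
        ∂unif (a j) (b j) := by
  simp_rw [hfun_eq_prod_eval_hfunFactor, ← Finset.prod_mul_distrib]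
  exact integral_fintype_prod_eq_prod
    (fun j y => (hfunFactor i a b j (k j)).eval y * (hfunFactor i a b j (k' j)).eval y)

lemma integral_eval_hfunFactor_self_mul (m n : ℕ) :
    ∫ y, (hfunFactor i a b i (m + 1)).eval y * (hfunFactor i a b i (n + 1)).eval y
      ∂unif (a i) (b i) = (m + 1) * (n + 1) * ∫ y, y ^ (m + n) ∂unif (a i) (b i) := by
  rw [← integral_const_mul]
  congr 1 with y
  simp only [hfunFactor_self_succ, eval_mul, eval_C, eval_X_pow, pow_add]
  ring

lemma linearIndependent_hfunFactor (j : ι) (d : ℕ) :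
    LinearIndependent ℝ fun m : Fin d => hfunFactor i a b j (m + 1) := by
  by_cases hji : j = i
  · subst hji
    have hm : ∀ m : Fin d, ((m : ℕ) : ℝ) + 1 ≠ 0 := fun m => by positivity
    refine linearIndependent_of_injective_natDegree (fun m => ?_) fun m n h => ?_
    · rw [hfunFactor_self_succ, C_mul_X_pow_eq_monomial, Ne, monomial_eq_zero_iff]
      exact hm m
    · dsimp only at h
      rw [hfunFactor_self_succ, hfunFactor_self_succ, natDegree_C_mul_X_pow _ _ (hm m),
        natDegree_C_mul_X_pow _ _ (hm n)] at h
      exact Fin.ext h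
  · refine linearIndependent_of_injective_natDegree (fun m => ?_) fun m n h => ?_
    · simpa [hfunFactor_of_ne i a b hji] using X_pow_sub_C_ne_zero m.val.succ_pos _
    · simpa [hfunFactor_of_ne i a b hji, Fin.val_inj] using h

end CenteredBasis

/-- The Gram matrix `M` of the mostly centered basis functions `(h_k)_{k ∈ K}` with respect to
a product of uniform distributions satisfies `λ_min(M) ≥ ∏_j λ_min(A^j) > 0`, where `A^i` is
the scaled Hankel moment matrix `A^i_{m,n} = m·n·E[X^{m+n-2}]` of the `i`-th marginal and, for
`j ≠ i`, `A^j` is the covariance matrix of `(X, …, X^d)` of the `j`-th marginal. -/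
theorem lambdaMin_gram_centeredBasis_ge {ι : Type*} [Fintype ι] [DecidableEq ι] (i : ι)
    (d : ℕ) (hd : 1 ≤ d) (a b : ι → ℝ) (hab : ∀ j, a j < b j)
    (κ : Type*) [Fintype κ] [Nonempty κ] [DecidableEq κ]
    (k : κ → ι → ℕ) (hkinj : Function.Injective k)
    (hk1 : ∀ s j, 1 ≤ k s j) (hkd : ∀ s j, k s j ≤ d)
    (A : ι → Matrix (Fin d) (Fin d) ℝ)
    (hAi : ∀ m n : Fin d, A i m n =
      ((m : ℕ) + 1) * ((n : ℕ) + 1) * ∫ x, x ^ ((m : ℕ) + (n : ℕ)) ∂(unif (a i) (b i)))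
    (hAj : ∀ j, j ≠ i → ∀ m n : Fin d, A j m n =
      ∫ x, (x ^ ((m : ℕ) + 1) - ∫ y, y ^ ((m : ℕ) + 1) ∂(unif (a j) (b j))) *
           (x ^ ((n : ℕ) + 1) - ∫ y, y ^ ((n : ℕ) + 1) ∂(unif (a j) (b j)))
        ∂(unif (a j) (b j)))
    (M : Matrix κ κ ℝ)
    (hM : ∀ s t, M s t =
      ∫ x, hfun i a b (k s) x * hfun i a b (k t) x
        ∂(Measure.pi fun j => unif (a j) (b j)))
    (hMh : M.IsHermitian) (hAh : ∀ j, (A j).IsHermitian) :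
    (∏ j, ⨅ m, (hAh j).eigenvalues m) ≤ (⨅ s, hMh.eigenvalues s) ∧
      0 < ∏ j, ⨅ m, (hAh j).eigenvalues m := by
  have : Nonempty (Fin d) := ⟨⟨0, hd⟩⟩
  have hA : ∀ j, A j = of fun m n : Fin d => ∫ y, (hfunFactor i a b j (m + 1)).eval y *
      (hfunFactor i a b j (n + 1)).eval y ∂unif (a j) (b j) := fun j => by
    ext m n
    by_cases hji : j = i
    · subst hji
      rw [hAi, of_apply, integral_eval_hfunFactor_self_mul]
    · rw [hAj j hji]
      simp [hfunFactor_of_ne i a b hji]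
  have hApos : ∀ j, (A j).PosDef := fun j => hA j ▸ posDef_of_integral_eval_mul_eval
    (fun q => q.continuous.integrable_unif _ _) (fun _ => integral_eval_sq_unif_pos (hab j))
    (linearIndependent_hfunFactor i a b j d)
  have hc : ∀ j, 0 < ⨅ m, (hAh j).eigenvalues m := fun j => (hApos j).ciInf_eigenvalues_pos
  refine ⟨?_, Finset.prod_pos fun j _ => hc j⟩
  let e : κ → ι → Fin d := fun s j =>
    ⟨k s j - 1, by have := hk1 s j; have := hkd s j; omega⟩
  have he : ∀ s j, (e s j : ℕ) + 1 = k s j := fun s j => Nat.sub_add_cancel (hk1 s j)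
  have he_inj : Function.Injective e := fun s t hst =>
    hkinj (funext fun j => by rw [← he s j, ← he t j, hst])
  have hMe : M = (piKronecker A).submatrix e e := by
    ext s t
    simp only [hM, integral_hfun_mul_hfun, submatrix_apply, piKronecker, of_apply, hA, he]
  rw [hMh.le_ciInf_eigenvalues_iff, hMe, ← submatrix_one e he_inj]
  exact submatrix_le_submatrix (prod_smul_one_le_piKronecker hAh (fun j => (hc j).le)
    fun j s => ciInf_le (Set.finite_range _).bddBelow s) e
end

section
/- Let c be a finite set with distinguished element i ∈ c, and let μ = ⊗_{j∈c} μ_j be a product probability measure on ℝ^c. Let H = Σ_{s∈S} H_s be a finite sum where each H_s(x) = a_s(x_i) · ∏_{j∈c∖{i}} (u_{s,j}(x_j) − E_{μ_j}[u_{s,j}]) with a_s and each u_{s,j} bounded measurable. Let G = Σ_{t∈T} G_t be a finite sum of bounded measurable functions where each G_t does not depend on the coordinate j_t for some j_t ∈ c∖{i}. Then ∫ (H + G)² dμ ≥ ∫ H² dμ; that is, adding terms that each miss some coordinate of c∖{i} cannot decrease the second moment of the fully centered part. -/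
/-!
Write `v_{s,j} = u_{s,j} - E_{μ_j}[u_{s,j}]`. Each product `H_s · G_t` contains the factor
`v_{s,j_t}(x_{j_t})`, while everything else in it is independent of `x_{j_t}`; integrating
out that coordinate first (Fubini) shows `∫ H_s G_t = 0`. Hence `H` and `G` are orthogonal in
`L²`, and `∫ (H + G)² = ∫ H² + ∫ G² ≥ ∫ H²`.
-/

open MeasureTheory Finset

theorem integral_mul_eq_zero_of_forall_eq {α : Type*} [MeasurableSpace α] {ν : Measure α}
    {φ g : α → ℝ} (hφ : ∫ a, φ a ∂ν = 0) (hg : ∀ a b, g a = g b) :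
    ∫ a, φ a * g a ∂ν = 0 := by
  rcases isEmpty_or_nonempty α with _ | ⟨⟨a₀⟩⟩
  · exact integral_of_isEmpty
  · simp_rw [hg _ a₀, integral_mul_const, hφ, zero_mul]

section Pi

variable {ι : Type*} [Fintype ι] [DecidableEq ι] {X : ι → Type*} [∀ j, MeasurableSpace (X j)]
  {μ : ∀ j, Measure (X j)} [∀ j, SigmaFinite (μ j)]

theorem integral_comp_eval_mul_eq_zero {j₀ : ι} {φ : X j₀ → ℝ} (hφ : ∫ t, φ t ∂μ j₀ = 0)
    {F : (∀ j, X j) → ℝ} (hF : DependsOn F {j₀}ᶜ) :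
    ∫ x, φ (x j₀) * F x ∂Measure.pi μ = 0 := by
  by_cases hint : Integrable (fun x => φ (x j₀) * F x) (Measure.pi μ)
  swap
  · exact integral_undef hint
  -- The outer Fubini variable collects the coordinates `j ≠ j₀`; the inner one is `x j₀` alone.
  let e := MeasurableEquiv.piEquivPiSubtypeProd X (· ≠ j₀)
  have he := measurePreserving_piEquivPiSubtypeProd μ (· ≠ j₀)
  let k₀ : {j // ¬ j ≠ j₀} := ⟨j₀, not_not.2 rfl⟩
  let g : _ → ℝ := fun z => φ (z.2 k₀) * F (e.symm z)
  have hg : (fun x => φ (x j₀) * F x) = fun x => g (e x) := by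
    funext x
    simp [g, e, k₀]
  rw [hg] at hint ⊢
  rw [he.integral_comp' (f := e) g,
    integral_prod g ((he.integrable_comp_emb e.measurableEmbedding).1 hint)]
  refine integral_eq_zero_of_ae (ae_of_all _ fun y => integral_mul_eq_zero_of_forall_eq ?_ ?_)
  · let : Unique {j // ¬ j ≠ j₀} := ⟨⟨k₀⟩, fun k => Subtype.ext (not_not.1 k.2)⟩
    exact ((measurePreserving_piUnique fun k : {j // ¬ j ≠ j₀} => μ k).integral_comp'
      (f := MeasurableEquiv.piUnique _) φ).trans hφ
  · intro z z'
    refine hF fun j hj => ?_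
    simp [e, MeasurableEquiv.piEquivPiSubtypeProd_symm_apply, show j ≠ j₀ from hj]

theorem integral_prod_mul_eq_zero {s : Finset ι} {j₀ : ι} (hj₀ : j₀ ∈ s) {v : ∀ j, X j → ℝ}
    (hv : ∫ t, v j₀ t ∂μ j₀ = 0) {F : (∀ j, X j) → ℝ} (hF : DependsOn F {j₀}ᶜ) :
    ∫ x, (∏ j ∈ s, v j (x j)) * F x ∂Measure.pi μ = 0 := by
  have hrest : DependsOn (fun x => (∏ j ∈ s.erase j₀, v j (x j)) * F x) {j₀}ᶜ := by
    intro x y hxy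
    dsimp only
    rw [prod_congr rfl fun j hj => congrArg (v j) (hxy j (ne_of_mem_erase hj)), hF hxy]
  simp_rw [← mul_prod_erase s _ hj₀, mul_assoc]
  exact integral_comp_eval_mul_eq_zero hv hrest

theorem integral_sum_prod_mul_sum_eq_zero {S T : Type*} [Fintype S] [Fintype T] {i : ι}
    {a : S → X i → ℝ} {v : S → ∀ j, X j → ℝ} (hv : ∀ s, ∀ j ≠ i, ∫ t, v s j t ∂μ j = 0)
    {G : T → (∀ j, X j) → ℝ} {jt : T → ι} (hjt : ∀ t, jt t ≠ i)
    (hG : ∀ t, DependsOn (G t) {jt t}ᶜ)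
    (hint : ∀ s t, Integrable
      (fun x => a s (x i) * (∏ j ∈ univ.erase i, v s j (x j)) * G t x) (Measure.pi μ)) :
    ∫ x, (∑ s, a s (x i) * ∏ j ∈ univ.erase i, v s j (x j)) * ∑ t, G t x ∂Measure.pi μ = 0 := by
  simp_rw [sum_mul, mul_sum]
  rw [integral_finsetSum _ fun s _ => integrable_finsetSum _ fun t _ => hint s t]
  refine sum_eq_zero fun s _ => ?_
  rw [integral_finsetSum _ fun t _ => hint s t]
  refine sum_eq_zero fun t _ => ?_
  simp_rw [mul_comm (a s _), mul_assoc]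
  refine integral_prod_mul_eq_zero (mem_erase.2 ⟨hjt t, mem_univ _⟩) (hv s (jt t) (hjt t)) ?_
  intro x y hxy
  dsimp only
  rw [hxy i (hjt t).symm, hG t hxy]

end Pi

theorem integral_sq_le_integral_add_sq {α : Type*} [MeasurableSpace α] {μ : Measure α}
    {f g : α → ℝ} (hf : MemLp f 2 μ) (hg : MemLp g 2 μ) (hfg : ∫ x, f x * g x ∂μ = 0) :
    ∫ x, f x ^ 2 ∂μ ≤ ∫ x, (f x + g x) ^ 2 ∂μ := by
  have hexpand : ∀ x, (f x + g x) ^ 2 = f x ^ 2 + (2 * (f x * g x) + g x ^ 2) := fun x => by ring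
  have hcross : Integrable (fun x => 2 * (f x * g x)) μ := (hf.integrable_mul hg).const_mul 2
  have hrest : Integrable (fun x => 2 * (f x * g x) + g x ^ 2) μ := hcross.add hg.integrable_sq
  simp_rw [hexpand]
  rw [integral_add hf.integrable_sq hrest, integral_add hcross hg.integrable_sq,
    integral_const_mul, hfg]
  have : 0 ≤ ∫ x, g x ^ 2 ∂μ := integral_nonneg fun x => sq_nonneg (g x)
  linarith

theorem memLp_top_of_exists_abs_le {α : Type*} [MeasurableSpace α] {μ : Measure α} {f : α → ℝ}
    (hf : Measurable f) (hb : ∃ C, ∀ x, |f x| ≤ C) : MemLp f ⊤ μ :=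
  let ⟨C, hC⟩ := hb
  memLp_top_of_bound hf.aestronglyMeasurable C (ae_of_all _ hC)

theorem memLp_top_finsetProd {α ι : Type*} [MeasurableSpace α] {μ : Measure α} {s : Finset ι}
    {f : ι → α → ℝ} (hf : ∀ j ∈ s, MemLp (f j) ⊤ μ) : MemLp (fun x => ∏ j ∈ s, f j x) ⊤ μ := by
  simpa using MemLp.prod' (p := fun _ => ⊤) hf

/-- Adding terms that each miss some coordinate of `c ∖ {i}` cannot decrease the second
moment of the fully centered part: if `H = Σ_s a_s(x_i)·∏_{j≠i}(u_{s,j}(x_j) − E[u_{s,j}])`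
and `G = Σ_t G_t` with each `G_t` bounded measurable and not depending on some coordinate
`j_t ∈ c ∖ {i}`, then `∫ (H + G)² dμ ≥ ∫ H² dμ` for the product measure `μ`. -/
theorem integral_sq_add_indep_terms_ge {ι : Type*} [Fintype ι] [DecidableEq ι] (i : ι)
    (μ : ι → Measure ℝ) [∀ j, IsProbabilityMeasure (μ j)]
    {S T : Type*} [Fintype S] [Fintype T]
    (a : S → ℝ → ℝ) (ham : ∀ s, Measurable (a s)) (hab : ∀ s, ∃ C : ℝ, ∀ t, |a s t| ≤ C)
    (u : S → ι → ℝ → ℝ) (hum : ∀ s j, Measurable (u s j))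
    (hub : ∀ s j, ∃ C : ℝ, ∀ t, |u s j t| ≤ C)
    (G : T → (ι → ℝ) → ℝ) (hGm : ∀ t, Measurable (G t))
    (hGb : ∀ t, ∃ C : ℝ, ∀ x, |G t x| ≤ C)
    (jt : T → ι) (hjt : ∀ t, jt t ≠ i)
    (hGind : ∀ t, ∀ x y : ι → ℝ, (∀ j, j ≠ jt t → x j = y j) → G t x = G t y)
    (H : (ι → ℝ) → ℝ)
    (hH : ∀ x, H x = ∑ s, a s (x i) *
      ∏ j ∈ Finset.univ.erase i, (u s j (x j) - ∫ y, u s j y ∂(μ j))) :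
    ∫ x, (H x) ^ 2 ∂(Measure.pi μ) ≤
      ∫ x, (H x + ∑ t, G t x) ^ 2 ∂(Measure.pi μ) := by
  set v : S → ∀ j, ℝ → ℝ := fun s j y => u s j y - ∫ z, u s j z ∂μ j
  have hv : ∀ s j, ∫ y, v s j y ∂μ j = 0 := fun s j => by
    simpa only [v, average_eq_integral] using integral_sub_average (μ j) (u s j)
  have hA : ∀ s, MemLp (fun x : ι → ℝ => a s (x i)) ⊤ (Measure.pi μ) := fun s =>
    (memLp_top_of_exists_abs_le (ham s) (hab s)).comp_measurePreserving (measurePreserving_eval μ i)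
  have hV : ∀ s j, MemLp (fun x : ι → ℝ => v s j (x j)) ⊤ (Measure.pi μ) := fun s j =>
    ((memLp_top_of_exists_abs_le (hum s j) (hub s j)).sub
      (memLp_top_const _)).comp_measurePreserving (measurePreserving_eval μ j)
  have hHs : ∀ s, MemLp (fun x => a s (x i) * ∏ j ∈ univ.erase i, v s j (x j)) ⊤ (Measure.pi μ) :=
    fun s => (memLp_top_finsetProd fun j _ => hV s j).mul' (hA s)
  have hGt : ∀ t, MemLp (G t) ⊤ (Measure.pi μ) :=
    fun t => memLp_top_of_exists_abs_le (hGm t) (hGb t)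
  refine integral_sq_le_integral_add_sq ?_
    ((memLp_finsetSum _ fun t _ => hGt t).mono_exponent le_top) ?_
  · rw [funext hH]
    exact (memLp_finsetSum _ fun s _ => hHs s).mono_exponent le_top
  simp_rw [hH]
  exact integral_sum_prod_mul_sum_eq_zero (fun s j _ => hv s j) hjt
    (fun t x y hxy => hGind t x y hxy) fun s t => ((hGt t).mul' (hHs s)).integrable le_top
end
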